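/- Let Ω ⊆ ℝⁿ be open, let V : Ω → ℝ be continuous, and suppose u₀ is twice continuously differentiable on Ω with u₀(x) > 0 for all x ∈ Ω and −Δu₀(x) + V(x)·u₀(x) = μ·u₀(x) on Ω for some real number μ. Then for every smooth function w : ℝⁿ → ℝ with compact support contained in Ω, ∫_Ω ( ‖∇w(x)‖² + V(x)·w(x)² ) dx ≥ μ·∫_Ω w(x)² dx. That is, an eigenvalue possessing a positive eigenfunction is a lower bound for the Rayleigh quotient (∫_Ω(‖∇w‖² + Vw²))/(∫_Ω w²) over all nonzero compactly supported smooth test functions. -/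

import Mathlib

open Real MeasureTheory
open scoped Manifold

/-- Laplacian of a function on `EuclideanSpace ℝ (Fin n)`: the sum over all coordinate
directions of the second derivative of `u` along that direction. -/
noncomputable def lapE {n : ℕ} (u : EuclideanSpace ℝ (Fin n) → ℝ)
    (x : EuclideanSpace ℝ (Fin n)) : ℝ :=
  ∑ i : Fin n, iteratedDeriv 2 (fun t : ℝ => u (x + t • EuclideanSpace.single i (1 : ℝ))) 0

lemma lapE_eq {n : ℕ} {Ω : Set (EuclideanSpace ℝ (Fin n))} (hΩ : IsOpen Ω)
    {u : EuclideanSpace ℝ (Fin n) → ℝ} (hu : ContDiffOn ℝ 2 u Ω) {x : EuclideanSpace ℝ (Fin n)}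
    (hx : x ∈ Ω) :
    lapE u x = ∑ i : Fin n, fderiv ℝ (fun y => fderiv ℝ u y (EuclideanSpace.single i (1:ℝ))) x
      (EuclideanSpace.single i (1:ℝ)) := by
  unfold lapE
  refine Finset.sum_congr rfl fun i _ => ?_
  set v := EuclideanSpace.single i (1:ℝ) with hv
  set ℓ : ℝ → EuclideanSpace ℝ (Fin n) := fun t => x + t • v with hℓdef
  have hℓ : ∀ t, HasDerivAt ℓ v t := fun t => by
    simpa [hℓdef] using ((hasDerivAt_id t).smul_const v).const_add x
  have hℓ0 : ℓ 0 = x := by simp [hℓdef]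
  have hI : IsOpen (ℓ ⁻¹' Ω) := hΩ.preimage (by fun_prop)
  have h0 : (0:ℝ) ∈ ℓ ⁻¹' Ω := by simp [Set.mem_preimage, hℓ0, hx]
  have hd : ∀ t ∈ ℓ ⁻¹' Ω, HasDerivAt (fun s => u (ℓ s)) (fderiv ℝ u (ℓ t) v) t := by
    intro t ht
    exact (((hu.differentiableOn (by norm_num)).differentiableAt
      (hΩ.mem_nhds ht)).hasFDerivAt).comp_hasDerivAt t (hℓ t)
  have hev : deriv (fun s => u (ℓ s)) =ᶠ[nhds 0] fun t => fderiv ℝ u (ℓ t) v := by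
    filter_upwards [hI.mem_nhds h0] with t ht
    exact (hd t ht).deriv
  have hA : DifferentiableAt ℝ (fun y => fderiv ℝ u y v) x := by
    have h1 : ContDiffOn ℝ 1 (fderiv ℝ u) Ω := hu.fderiv_of_isOpen hΩ (by norm_num)
    exact ((h1.clm_apply contDiffOn_const).differentiableOn one_ne_zero).differentiableAt
      (hΩ.mem_nhds hx)
  have hd2 : HasDerivAt (fun t => fderiv ℝ u (ℓ t) v)
      (fderiv ℝ (fun y => fderiv ℝ u y v) x v) 0 := by
    have hA' : HasFDerivAt (fun y => fderiv ℝ u y v)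
        (fderiv ℝ (fun y => fderiv ℝ u y v) x) (ℓ 0) := hℓ0 ▸ hA.hasFDerivAt
    exact hA'.comp_hasDerivAt 0 (hℓ 0)
  calc iteratedDeriv 2 (fun t => u (ℓ t)) 0 = deriv (deriv (fun t => u (ℓ t))) 0 := by
        rw [iteratedDeriv_succ, iteratedDeriv_one]
      _ = deriv (fun t => fderiv ℝ u (ℓ t) v) 0 := hev.deriv_eq
      _ = fderiv ℝ (fun y => fderiv ℝ u y v) x v := hd2.deriv

theorem statement6 {n : ℕ} (Ω : Set (EuclideanSpace ℝ (Fin n))) (hΩ : IsOpen Ω)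
    (V : EuclideanSpace ℝ (Fin n) → ℝ) (hV : ContinuousOn V Ω)
    (u₀ : EuclideanSpace ℝ (Fin n) → ℝ) (hu₀ : ContDiffOn ℝ 2 u₀ Ω)
    (hpos : ∀ x ∈ Ω, 0 < u₀ x) (μ : ℝ)
    (heig : ∀ x ∈ Ω, -lapE u₀ x + V x * u₀ x = μ * u₀ x) :
    ∀ w : EuclideanSpace ℝ (Fin n) → ℝ, ContDiff ℝ (⊤ : ℕ∞) w → HasCompactSupport w →
      tsupport w ⊆ Ω →
      μ * ∫ x in Ω, (w x) ^ 2 ≤ ∫ x in Ω, (‖gradient w x‖ ^ 2 + V x * (w x) ^ 2) := by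
  intro w hw hwc hwΩ
  -- cutoff function χ, equal to 1 on open U ⊇ tsupport w, 0 on open W ⊇ Ωᶜ
  have hdisj : Disjoint Ωᶜ (tsupport w) := Set.disjoint_left.mpr fun x hx hxK => hx (hwΩ hxK)
  obtain ⟨χ₀, hχ0, hχ1, -⟩ := exists_contMDiffMap_zero_one_nhds_of_isClosed (n := (⊤ : ℕ∞))
    (𝓘(ℝ, EuclideanSpace ℝ (Fin n))) hΩ.isClosed_compl (isClosed_tsupport w) hdisj
  obtain ⟨W, hWopen, hWsub, hW0⟩ := eventually_nhdsSet_iff_exists.mp hχ0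
  obtain ⟨U, hUopen, hUsub, hU1⟩ := eventually_nhdsSet_iff_exists.mp hχ1
  set χ : EuclideanSpace ℝ (Fin n) → ℝ := (χ₀ : EuclideanSpace ℝ (Fin n) → ℝ) with hχdef
  have hχ : ContDiff ℝ (⊤ : ℕ∞) χ := contMDiff_iff_contDiff.mp χ₀.contMDiff
  clear hχ0 hχ1
  -- basic abbreviations
  set e : Fin n → EuclideanSpace ℝ (Fin n) := fun i => EuclideanSpace.single i (1:ℝ) with he
  set K := tsupport w with hK
  set φ : EuclideanSpace ℝ (Fin n) → ℝ := fun x => w x ^ 2 / u₀ x with hφdef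
  set g : Fin n → EuclideanSpace ℝ (Fin n) → ℝ :=
    fun i x => χ x * fderiv ℝ u₀ x (e i) with hgdef
  -- basic facts
  have hwC1 : ContDiff ℝ 1 w := hw.of_le (by simp)
  have hwzero : ∀ x ∉ K, w x = 0 := fun x hx => image_eq_zero_of_notMem_tsupport hx
  have hnot : ∀ (f : EuclideanSpace ℝ (Fin n) → ℝ) (x), x ∉ tsupport f → fderiv ℝ f x = 0 := by
    intro f x hx
    by_contra h
    exact hx (support_fderiv_subset ℝ (Function.mem_support.mpr h))
  have hwd0 : ∀ x ∉ K, fderiv ℝ w x = 0 := fun x hx => hnot w x hx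
  have hu₀d : ∀ x ∈ Ω, DifferentiableAt ℝ u₀ x := fun x hx =>
    (hu₀.differentiableOn (by norm_num)).differentiableAt (hΩ.mem_nhds hx)
  have hC1 : ContDiffOn ℝ 1 (fderiv ℝ u₀) Ω := hu₀.fderiv_of_isOpen hΩ (by norm_num)
  have hAC1 : ∀ i : Fin n, ContDiffOn ℝ 1 (fun y => fderiv ℝ u₀ y (e i)) Ω :=
    fun i => hC1.clm_apply contDiffOn_const
  have hsuppφ : ∀ x ∉ K, φ x = 0 := by
    intro x hx; simp [hφdef, hwzero x hx]
  have htφ : tsupport φ ⊆ K := by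
    apply closure_minimal _ (isClosed_tsupport w)
    intro x hx
    by_contra hxK
    exact hx (hsuppφ x hxK)
  have hKU : K ⊆ U := hUsub
  have hKΩ : K ⊆ Ω := hwΩ
  -- smoothness of φ and g i
  have hφC1 : ContDiff ℝ 1 φ := by
    rw [contDiff_iff_contDiffAt]
    intro x
    by_cases hx : x ∈ Ω
    · exact ((hwC1.contDiffAt).pow 2).div (((hu₀ x hx).contDiffAt
        (hΩ.mem_nhds hx)).of_le (by norm_num)) (hpos x hx).ne'
    · have hxK : x ∉ K := fun h => hx (hKΩ h)
      have hev : φ =ᶠ[nhds x] fun _ => (0:ℝ) := by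
        filter_upwards [(isClosed_tsupport w).isOpen_compl.mem_nhds hxK] with y hy
        exact hsuppφ y hy
      exact (contDiffAt_const (c := (0:ℝ))).congr_of_eventuallyEq hev
  have hgC1 : ∀ i, ContDiff ℝ 1 (g i) := by
    intro i
    rw [contDiff_iff_contDiffAt]
    intro x
    by_cases hx : x ∈ Ω
    · exact ((hχ.of_le (mod_cast le_top)).contDiffAt).mul ((hAC1 i x hx).contDiffAt (hΩ.mem_nhds hx))
    · have hxW : x ∈ W := hWsub hx
      have hev : g i =ᶠ[nhds x] fun _ => (0:ℝ) := by
        filter_upwards [hWopen.mem_nhds hxW] with y hy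
        simp [hgdef, hW0 y hy]
      exact (contDiffAt_const (c := (0:ℝ))).congr_of_eventuallyEq hev
  -- compact support facts
  have hφcs : HasCompactSupport φ := HasCompactSupport.intro hwc hsuppφ
  have hφd0 : ∀ x ∉ K, fderiv ℝ φ x = 0 := fun x hx => hnot φ x fun h => hx (htφ h)
  -- pointwise : gradient norm
  have hnorm : ∀ x, ‖gradient w x‖ ^ 2 = ∑ i : Fin n, (fderiv ℝ w x (e i)) ^ 2 := by
    intro x
    have h1 : ∀ i : Fin n, gradient w x i = fderiv ℝ w x (e i) := by
      intro i
      have h2 : (inner ℝ (gradient w x) (e i) : ℝ) = fderiv ℝ w x (e i) := by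
        simp [gradient, InnerProductSpace.toDual_symm_apply]
      rw [← h2, he]
      simp only [EuclideanSpace.inner_single_right, one_mul, conj_trivial]
    rw [EuclideanSpace.norm_eq, Real.sq_sqrt (by positivity)]
    refine Finset.sum_congr rfl fun i _ => ?_
    rw [← h1 i, Real.norm_eq_abs, sq_abs]
  -- pointwise : fderiv of φ on Ω
  have hφ' : ∀ x ∈ Ω, ∀ i : Fin n, fderiv ℝ φ x (e i) =
      2 * (w x / u₀ x) * fderiv ℝ w x (e i) - (w x / u₀ x) ^ 2 * fderiv ℝ u₀ x (e i) := by
    intro x hx i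
    have hne : u₀ x ≠ 0 := (hpos x hx).ne'
    have hwd : HasFDerivAt w (fderiv ℝ w x) x := (hwC1.differentiable one_ne_zero x).hasFDerivAt
    have hud : HasFDerivAt u₀ (fderiv ℝ u₀ x) x := (hu₀d x hx).hasFDerivAt
    have hsq : HasFDerivAt (fun y => w y ^ 2) ((2 * w x ^ 1) • fderiv ℝ w x) x := by
      have := (hasDerivAt_pow 2 (w x)).comp_hasFDerivAt x hwd
      simpa [Function.comp_def] using this
    have hinv : HasFDerivAt (fun y => (u₀ y)⁻¹) ((-((u₀ x) ^ 2)⁻¹) • fderiv ℝ u₀ x) x := by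
      have := (hasDerivAt_inv hne).comp_hasFDerivAt x hud
      simpa [Function.comp_def] using this
    have hmul := hsq.mul hinv
    have hφx : HasFDerivAt φ ((w x ^ 2) • ((-((u₀ x) ^ 2)⁻¹) • fderiv ℝ u₀ x)
        + ((u₀ x)⁻¹) • ((2 * w x ^ 1) • fderiv ℝ w x)) x := by
      simp only [hφdef, div_eq_mul_inv]
      exact hmul
    rw [hφx.fderiv]
    simp only [ContinuousLinearMap.add_apply, ContinuousLinearMap.smul_apply, smul_eq_mul,
      pow_one]
    field_simp
    ring
  -- pointwise : fderiv of g i on U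
  have hg' : ∀ i, ∀ x ∈ U, fderiv ℝ (g i) x =
      fderiv ℝ (fun y => fderiv ℝ u₀ y (e i)) x := by
    intro i x hx
    apply Filter.EventuallyEq.fderiv_eq
    filter_upwards [hUopen.mem_nhds hx] with y hy
    simp [hgdef, hU1 y hy]
  -- integrability
  have hintW : Integrable (fun x => w x ^ 2) := by
    exact ((hwC1.continuous).pow 2).integrable_of_hasCompactSupport
      (HasCompactSupport.intro hwc fun x hx => by simp [hwzero x hx])
  have hcontVW : Continuous (fun x => V x * w x ^ 2) := by
    rw [continuous_iff_continuousAt]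
    intro x
    by_cases hx : x ∈ Ω
    · exact (hV.continuousAt (hΩ.mem_nhds hx)).mul (((hwC1.continuous).pow 2).continuousAt)
    · have hxK : x ∉ K := fun h => hx (hKΩ h)
      have hev : (fun x => V x * w x ^ 2) =ᶠ[nhds x] fun _ => (0:ℝ) := by
        filter_upwards [(isClosed_tsupport w).isOpen_compl.mem_nhds hxK] with y hy
        simp [hwzero y hy]
      exact continuousAt_const.congr hev.symm
  have hintVW : Integrable (fun x => V x * w x ^ 2) :=
    hcontVW.integrable_of_hasCompactSupport
      (HasCompactSupport.intro hwc fun x hx => by simp [hwzero x hx])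
  have hfwcont : Continuous (fderiv ℝ w) := hwC1.continuous_fderiv one_ne_zero
  have happ : ∀ (f : EuclideanSpace ℝ (Fin n) → ℝ), ContDiff ℝ 1 f → ∀ i : Fin n,
      Continuous (fun x => fderiv ℝ f x (e i)) := fun f hf i =>
    (ContinuousLinearMap.apply ℝ ℝ (e i)).continuous.comp (hf.continuous_fderiv one_ne_zero)
  have hintB2 : Integrable (fun x => ∑ i : Fin n, (fderiv ℝ w x (e i)) ^ 2) := by
    refine (continuous_finset_sum _ fun i _ => (happ w hwC1 i).pow 2).integrable_of_hasCompactSupport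
      (HasCompactSupport.intro hwc fun x hx => ?_)
    simp [hwd0 x hx]
  have hintφg' : ∀ i, Integrable (fun x => φ x * fderiv ℝ (g i) x (e i)) := by
    intro i
    refine (hφC1.continuous.mul (happ (g i) (hgC1 i) i)).integrable_of_hasCompactSupport
      (HasCompactSupport.intro hwc fun x hx => ?_)
    simp [hsuppφ x hx]
  have hintφ'g : ∀ i, Integrable (fun x => fderiv ℝ φ x (e i) * g i x) := by
    intro i
    refine ((happ φ hφC1 i).mul (hgC1 i).continuous).integrable_of_hasCompactSupport
      (HasCompactSupport.intro hwc fun x hx => ?_)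
    simp [hφd0 x hx]
  have hintφg : ∀ i, Integrable (fun x => φ x * g i x) := by
    intro i
    refine (hφC1.continuous.mul (hgC1 i).continuous).integrable_of_hasCompactSupport
      (HasCompactSupport.intro hwc fun x hx => ?_)
    simp [hsuppφ x hx]
  -- integration by parts
  have hibp : ∀ i : Fin n, ∫ x, φ x * fderiv ℝ (g i) x (e i) =
      -∫ x, fderiv ℝ φ x (e i) * g i x := by
    intro i
    exact integral_mul_fderiv_eq_neg_fderiv_mul_of_integrable (hintφ'g i) (hintφg' i)
      (hintφg i) (fun x _ => hφC1.differentiable one_ne_zero x) (fun x _ => (hgC1 i).differentiable one_ne_zero x)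
  -- pointwise rewriting of the boundary term
  have hPt3 : ∀ (i : Fin n) x, fderiv ℝ φ x (e i) * g i x =
      2 * (w x / u₀ x) * fderiv ℝ w x (e i) * fderiv ℝ u₀ x (e i)
        - (w x / u₀ x) ^ 2 * (fderiv ℝ u₀ x (e i)) ^ 2 := by
    intro i x
    by_cases hx : x ∈ K
    · have hxΩ := hKΩ hx
      rw [hφ' x hxΩ i]
      have hgx : g i x = fderiv ℝ u₀ x (e i) := by simp [hgdef, hU1 x (hKU hx)]
      rw [hgx]; ring
    · rw [hφd0 x hx]
      simp [hwzero x hx]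
  -- reduce set integrals to global integrals
  have hgrad0 : ∀ x ∉ K, gradient w x = 0 := by
    intro x hx; simp [gradient, hwd0 x hx]
  have hI1 : ∫ x in Ω, w x ^ 2 = ∫ x, w x ^ 2 :=
    setIntegral_eq_integral_of_forall_compl_eq_zero fun x hx => by
      simp [hwzero x fun h => hx (hKΩ h)]
  have hI2 : ∫ x in Ω, (‖gradient w x‖ ^ 2 + V x * w x ^ 2)
      = ∫ x, (‖gradient w x‖ ^ 2 + V x * w x ^ 2) :=
    setIntegral_eq_integral_of_forall_compl_eq_zero fun x hx => by
      have hxK : x ∉ K := fun h => hx (hKΩ h)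
      simp [hwzero x hxK, hgrad0 x hxK]
  rw [hI1, hI2]
  have hsplit : ∫ x, (‖gradient w x‖ ^ 2 + V x * w x ^ 2)
      = (∫ x, ∑ i : Fin n, (fderiv ℝ w x (e i)) ^ 2) + ∫ x, V x * w x ^ 2 := by
    rw [← integral_add hintB2 hintVW]
    exact integral_congr_ae (Filter.Eventually.of_forall fun x => by simp only [hnorm x])
  rw [hsplit]
  have hμ : μ * ∫ x, w x ^ 2 = ∫ x, μ * w x ^ 2 := by
    simpa [smul_eq_mul] using (integral_smul μ (fun x => w x ^ 2)).symm
  have hVW : (∫ x, V x * w x ^ 2) - (∫ x, μ * w x ^ 2) = ∫ x, (V x - μ) * w x ^ 2 := by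
    rw [← integral_sub hintVW (hintW.const_mul μ)]
    congr 1; funext x; ring
  -- the key integral identity
  have hkey : ∫ x, (V x - μ) * w x ^ 2 = ∑ i : Fin n, ∫ x, φ x * fderiv ℝ (g i) x (e i) := by
    rw [← integral_finset_sum _ fun i _ => hintφg' i]
    refine integral_congr_ae (Filter.Eventually.of_forall fun x => ?_)
    by_cases hx : x ∈ K
    · have hxΩ := hKΩ hx
      have hlap := lapE_eq hΩ hu₀ hxΩ
      have hlap2 : lapE u₀ x = (V x - μ) * u₀ x := by have := heig x hxΩ; linarith
      calc (V x - μ) * w x ^ 2 = φ x * lapE u₀ x := by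
            rw [hlap2]
            simp only [hφdef]
            field_simp [(hpos x hxΩ).ne']
        _ = ∑ i : Fin n, φ x * fderiv ℝ (g i) x (e i) := by
            rw [hlap, Finset.mul_sum]
            exact Finset.sum_congr rfl fun i _ => by rw [hg' i x (hKU hx), he]
    · simp [hwzero x hx, hsuppφ x hx]
  have hintsum : Integrable (fun x => ∑ i : Fin n, fderiv ℝ φ x (e i) * g i x) :=
    integrable_finset_sum _ fun i _ => hintφ'g i
  have h1 : ∑ i : Fin n, ∫ x, φ x * fderiv ℝ (g i) x (e i)
      = -∫ x, ∑ i : Fin n, fderiv ℝ φ x (e i) * g i x := by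
    rw [integral_finset_sum _ fun i _ => hintφ'g i, ← Finset.sum_neg_distrib]
    exact Finset.sum_congr rfl fun i _ => hibp i
  have h2 : (∫ x, ∑ i : Fin n, (fderiv ℝ w x (e i)) ^ 2)
      - ∫ x, ∑ i : Fin n, fderiv ℝ φ x (e i) * g i x
      = ∫ x, ∑ i : Fin n, (fderiv ℝ w x (e i) - w x / u₀ x * fderiv ℝ u₀ x (e i)) ^ 2 := by
    rw [← integral_sub hintB2 hintsum]
    refine integral_congr_ae (Filter.Eventually.of_forall fun x => ?_)
    simp only [← Finset.sum_sub_distrib]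
    refine Finset.sum_congr rfl fun i _ => ?_
    rw [hPt3 i x]; ring
  have hQnonneg : 0 ≤ ∫ x, ∑ i : Fin n, (fderiv ℝ w x (e i)
      - w x / u₀ x * fderiv ℝ u₀ x (e i)) ^ 2 :=
    integral_nonneg fun x => Finset.sum_nonneg fun i _ => sq_nonneg _
  linarith [hμ, hVW, hkey, h1, h2, hQnonneg]
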